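/- Suppose N₂/N₁ < r₁. Then every germ solution of the call-center system satisfies ρ₁ = N₂/(π_ext·(τ_tr + τ_ext')), ρ₅ = N₂/(τ_tr + τ_ext') and ρ₆ = 0. -/

import Mathlib

/-- Lexicographic order on `ℝ × ℝ`. -/
def lexLe (p q : ℝ × ℝ) : Prop := p.1 < q.1 ∨ (p.1 = q.1 ∧ p.2 ≤ q.2)

/-- Strict lexicographic order on `ℝ × ℝ`. -/
def lexLt (p q : ℝ × ℝ) : Prop := lexLe p q ∧ p ≠ q

/-- Lexicographic minimum on `ℝ × ℝ`. -/
noncomputable def lexMin (p q : ℝ × ℝ) : ℝ × ℝ :=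
  if p.1 < q.1 ∨ (p.1 = q.1 ∧ p.2 ≤ q.2) then p else q

/-- Parameters of the emergency call center: routing proportions `pe, pu, pa`
(for extremely urgent, urgent, and advice calls), holding times
`te, tu, ta, ttr, te', tu'`, and staffing levels `N1, N2`. -/
structure CCParams where
  pe : ℝ
  pu : ℝ
  pa : ℝ
  te : ℝ
  tu : ℝ
  ta : ℝ
  ttr : ℝ
  te' : ℝ
  tu' : ℝ
  N1 : ℝ
  N2 : ℝ
  hpe : 0 < pe
  hpu : 0 < pu
  hpa : 0 < pa
  hsum : pe + pu + pa = 1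
  hte : 0 < te
  htu : 0 < tu
  hta : 0 < ta
  httr : 0 < ttr
  hte' : 0 < te'
  htu' : 0 < tu'
  hN1 : 0 < N1
  hN2 : 0 < N2

/-- Average treatment time at level 1. -/
noncomputable def CCParams.tbar (P : CCParams) : ℝ :=
  P.pe * (P.te + P.ttr) + P.pu * P.tu + P.pa * P.ta

/-- First phase transition point. -/
noncomputable def CCParams.r1 (P : CCParams) : ℝ := P.pe * (P.ttr + P.te') / P.tbar

/-- Second phase transition point. -/
noncomputable def CCParams.r2 (P : CCParams) : ℝ :=
  (P.pe * (P.ttr + P.te') + P.pu * P.tu') / P.tbar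

/-- A germ solution of the call-center system. -/
noncomputable def CCParams.GermSol (P : CCParams) (ρ1 u1 ρ5 u5 ρ6 u6 : ℝ) : Prop :=
  0 ≤ ρ1 ∧ 0 ≤ ρ5 ∧ 0 ≤ ρ6 ∧
  -- (a)
  (ρ1, u1) = (ρ5 + P.pu * ρ1 + P.pa * ρ1,
    P.N1 + (u5 - ρ5 * P.ttr) + P.pu * (u1 - ρ1 * P.tu) + P.pa * (u1 - ρ1 * P.ta)) ∧
  -- (b), case ρ6 = 0
  (ρ6 = 0 → (ρ5, u5) = lexMin (ρ5, P.N2 + u5 - ρ5 * (P.ttr + P.te'))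
      (P.pe * ρ1, P.pe * (u1 - ρ1 * P.te))) ∧
  -- (b), case ρ6 > 0
  (0 < ρ6 → (ρ5, u5) = (P.pe * ρ1, P.pe * (u1 - ρ1 * P.te))) ∧
  -- (c)
  (ρ6, u6) = lexMin (ρ6, P.N2 - ρ5 * (P.ttr + P.te') + u6 - ρ6 * P.tu')
      (P.pu * ρ1, P.pu * (u1 - ρ1 * P.tu))

/-- The δ-discretized call-center equations at time `t`. -/
noncomputable def CCParams.Eqns (P : CCParams) (z1 z5 z6 : ℝ → ℝ) (δ t : ℝ) : Prop :=
  z1 t = P.N1 + z5 (t - P.ttr) + P.pu * z1 (t - P.tu) + P.pa * z1 (t - P.ta) ∧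
  z5 t = min (P.N2 + z5 (t - P.ttr - P.te') + z6 (t - P.tu') - z6 (t - δ))
      (P.pe * z1 (t - P.te)) ∧
  z6 t = min (P.N2 + z5 (t - P.ttr - P.te') + z6 (t - P.tu') - z5 t)
      (P.pu * z1 (t - P.tu))

/-!
Routing conservation at level 1 gives `ρ₅ = π_ext ρ₁`, and equation (c) bounds the level-2 load:
`ρ₅ (τ_tr + τ_ext') + ρ₆ τ_ur' ≤ N₂`. In (b) either the level-2 extremely-urgent capacity binds,
`ρ₅ (τ_tr + τ_ext') = N₂`, or level 1 is the bottleneck, in which case (a) forces `N₁ = ρ₁ τ̄`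
and hence `r₁ = ρ₅ (τ_tr + τ_ext') / N₁ ≤ N₂ / N₁`, contradicting the phase assumption.
Once the capacity binds, the load bound leaves no room for `ρ₆`.
-/

theorem lexLe_lexMin_left (p q : ℝ × ℝ) : lexLe (lexMin p q) p := by
  unfold lexMin lexLe
  split_ifs with h
  · exact Or.inr ⟨rfl, le_rfl⟩
  · rcases lt_trichotomy q.1 p.1 with hlt | heq | hgt
    · exact Or.inl hlt
    · exact Or.inr ⟨heq, by_contra fun hle => h (Or.inr ⟨heq.symm, (not_le.mp hle).le⟩)⟩
    · exact absurd (Or.inl hgt) h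

theorem lexMin_eq_or (p q : ℝ × ℝ) : lexMin p q = p ∨ lexMin p q = q := by
  unfold lexMin
  split_ifs
  · exact Or.inl rfl
  · exact Or.inr rfl

theorem le_of_mk_eq_lexMin_mk {a b c : ℝ} {q : ℝ × ℝ} (h : (a, b) = lexMin (a, c) q) :
    b ≤ c := by
  have hle := lexLe_lexMin_left (a, c) q
  rw [← h] at hle
  simpa [lexLe] using hle

namespace CCParams

theorem tbar_pos (P : CCParams) : 0 < P.tbar := by
  have := P.hpe; have := P.hpu; have := P.hpa
  have := P.hte; have := P.htu; have := P.hta; have := P.httr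
  unfold tbar
  positivity

variable {P : CCParams} {ρ1 u1 ρ5 u5 ρ6 u6 : ℝ}

theorem GermSol.rho5_eq (h : P.GermSol ρ1 u1 ρ5 u5 ρ6 u6) : ρ5 = P.pe * ρ1 := by
  obtain ⟨-, -, -, ha, -⟩ := h
  have ha1 := (Prod.mk.injEq _ _ _ _).mp ha |>.1
  linear_combination -ha1 - ρ1 * P.hsum

theorem GermSol.load_le (h : P.GermSol ρ1 u1 ρ5 u5 ρ6 u6) :
    ρ5 * (P.ttr + P.te') + ρ6 * P.tu' ≤ P.N2 := by
  obtain ⟨-, -, -, -, -, -, hc⟩ := h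
  linarith [le_of_mk_eq_lexMin_mk hc]

theorem GermSol.ext_capacity_eq_or (h : P.GermSol ρ1 u1 ρ5 u5 ρ6 u6) :
    ρ5 * (P.ttr + P.te') = P.N2 ∨ (ρ5, u5) = (P.pe * ρ1, P.pe * (u1 - ρ1 * P.te)) := by
  obtain ⟨-, -, h6, -, hb0, hbp, -⟩ := h
  rcases h6.eq_or_lt with h0 | hpos
  · have hb := hb0 h0.symm
    rcases lexMin_eq_or (ρ5, P.N2 + u5 - ρ5 * (P.ttr + P.te'))
        (P.pe * ρ1, P.pe * (u1 - ρ1 * P.te)) with e | e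
    · rw [e, Prod.mk.injEq] at hb
      left
      linarith [hb.2]
    · exact Or.inr (hb.trans e)
  · exact Or.inr (hbp hpos)

theorem GermSol.N1_eq_mul_tbar_of_ext_eq (h : P.GermSol ρ1 u1 ρ5 u5 ρ6 u6)
    (hext : (ρ5, u5) = (P.pe * ρ1, P.pe * (u1 - ρ1 * P.te))) : P.N1 = ρ1 * P.tbar := by
  have h5 := h.rho5_eq
  obtain ⟨-, -, -, ha, -⟩ := h
  have ha2 := (Prod.mk.injEq _ _ _ _).mp ha |>.2
  have hb2 := (Prod.mk.injEq _ _ _ _).mp hext |>.2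
  unfold tbar
  linear_combination -ha2 - hb2 - u1 * P.hsum + P.ttr * h5

end CCParams

/-- if `N₂/N₁ < r₁`, every germ solution satisfies
`ρ₁ = N₂/(π_ext·(τ_tr + τ_ext'))`, `ρ₅ = N₂/(τ_tr + τ_ext')` and `ρ₆ = 0`. -/
theorem throughput_phase_low (P : CCParams) (hphase : P.N2 / P.N1 < P.r1)
    (ρ1 u1 ρ5 u5 ρ6 u6 : ℝ) (hsol : P.GermSol ρ1 u1 ρ5 u5 ρ6 u6) :
    ρ1 = P.N2 / (P.pe * (P.ttr + P.te')) ∧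
    ρ5 = P.N2 / (P.ttr + P.te') ∧ ρ6 = 0 := by
  have h5 := hsol.rho5_eq
  have hload := hsol.load_le
  have h6 : 0 ≤ ρ6 := hsol.2.2.1
  have hρ6 : 0 ≤ ρ6 * P.tu' := mul_nonneg h6 P.htu'.le
  have hsat : ρ5 * (P.ttr + P.te') = P.N2 := by
    refine hsol.ext_capacity_eq_or.resolve_right fun hext => hphase.not_ge ?_
    have hN1 := hsol.N1_eq_mul_tbar_of_ext_eq hext
    have hρ1 : ρ1 ≠ 0 := by
      rintro rfl
      linarith [P.hN1]
    calc P.r1 = ρ5 * (P.ttr + P.te') / P.N1 := by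
          rw [CCParams.r1, hN1, h5]
          field_simp [P.tbar_pos.ne']
      _ ≤ P.N2 / P.N1 := div_le_div_of_nonneg_right (by linarith) P.hN1.le
  have hpos : 0 < P.ttr + P.te' := add_pos P.httr P.hte'
  refine ⟨?_, eq_div_of_mul_eq hpos.ne' hsat, ?_⟩
  · rw [eq_div_iff (mul_pos P.hpe hpos).ne']
    linear_combination hsat - (P.ttr + P.te') * h5
  · exact le_antisymm (nonpos_of_mul_nonpos_left (by linarith) P.htu') h6
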